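/- For 0 < p < 2, ε > 0, and any real x, the function w ↦ w·x² + φ_p(w), where φ_p(w) = ((2-p)/2)·((2/p)·w)^(p/(p-2)) + ε·w, attains its minimum over w > 0 at w_opt = (p/2)·(x² + ε)^((p-2)/2), and the minimum value equals (x² + ε)^(p/2). -/

import Mathlib

/-! With `θ = p / 2` and `s = x² + ε`, the objective is `w s + (1 - θ) (w / θ) ^ (θ / (θ - 1))`.
Putting `t = w / θ`, this is the weighted arithmetic mean `θ a + (1 - θ) b` of `a = t s` and
`b = t ^ (θ / (θ - 1))`, whose weighted geometric mean `a ^ θ b ^ (1 - θ)` is `s ^ θ` for every `t`.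
So weighted AM–GM gives the lower bound, with equality exactly when `a = b`, i.e. `t = s ^ (θ - 1)`. -/

namespace Real

variable {θ s t w : ℝ}

lemma mul_rpow_mul_rpow_div_sub_one (hs : 0 < s) (ht : 0 < t) (hθ : θ ≠ 1) :
    (t * s) ^ θ * (t ^ (θ / (θ - 1))) ^ (1 - θ) = s ^ θ := by
  have hexp : θ / (θ - 1) * (1 - θ) = -θ := by field_simp [sub_ne_zero.2 hθ]; ring
  rw [mul_rpow ht.le hs.le, ← rpow_mul ht.le, hexp, mul_right_comm, ← rpow_add ht]
  simp

lemma mul_eq_rpow_div_sub_one_iff (hs : 0 < s) (ht : 0 < t) (hθ : θ ≠ 1) :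
    t * s = t ^ (θ / (θ - 1)) ↔ t = s ^ (θ - 1) := by
  have hθ' : θ - 1 ≠ 0 := sub_ne_zero.2 hθ
  have hsplit : t ^ (θ / (θ - 1)) = t * t ^ (θ - 1)⁻¹ := by
    rw [mul_comm, ← rpow_add_one ht.ne']
    congr 1
    field_simp
    ring
  rw [hsplit, mul_right_inj' ht.ne', eq_comm, rpow_inv_eq ht.le hs.le hθ']

lemma rpow_le_mul_add_rpow_div (hθ₀ : 0 < θ) (hθ₁ : θ < 1) (hs : 0 < s) (hw : 0 < w) :
    s ^ θ ≤ w * s + (1 - θ) * (w / θ) ^ (θ / (θ - 1)) := by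
  have ht : 0 < w / θ := div_pos hw hθ₀
  calc s ^ θ = (w / θ * s) ^ θ * ((w / θ) ^ (θ / (θ - 1))) ^ (1 - θ) :=
        (mul_rpow_mul_rpow_div_sub_one hs ht hθ₁.ne).symm
    _ ≤ θ * (w / θ * s) + (1 - θ) * (w / θ) ^ (θ / (θ - 1)) :=
        geom_mean_le_arith_mean2_weighted hθ₀.le (by linarith) (by positivity) (by positivity)
          (by ring)
    _ = w * s + (1 - θ) * (w / θ) ^ (θ / (θ - 1)) := by field_simp

lemma rpow_eq_mul_add_rpow_div_iff (hθ₀ : 0 < θ) (hθ₁ : θ < 1) (hs : 0 < s) (hw : 0 < w) :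
    s ^ θ = w * s + (1 - θ) * (w / θ) ^ (θ / (θ - 1)) ↔ w = θ * s ^ (θ - 1) := by
  have ht : 0 < w / θ := div_pos hw hθ₀
  have hmean : w * s + (1 - θ) * (w / θ) ^ (θ / (θ - 1)) =
      θ * (w / θ * s) + (1 - θ) * (w / θ) ^ (θ / (θ - 1)) := by field_simp
  rw [hmean, ← mul_rpow_mul_rpow_div_sub_one hs ht hθ₁.ne,
    geom_mean_eq_arith_mean2_weighted_iff_of_pos hθ₀ (by linarith) (by positivity)
      (by positivity) (by ring),
    mul_eq_rpow_div_sub_one_iff hs ht hθ₁.ne, div_eq_iff hθ₀.ne', mul_comm]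

end Real

/-- Variational identity: for 0 < p < 2 and ε > 0, the function
w ↦ w·x² + φ_p(w) over w > 0 attains its minimum uniquely at
w_opt = (p/2)·(x²+ε)^((p-2)/2), with minimum value (x²+ε)^(p/2). -/
theorem stmt_0 (p ε x : ℝ) (hp : 0 < p) (hp2 : p < 2) (hε : 0 < ε) :
    let φ : ℝ → ℝ := fun w => ((2 - p) / 2) * ((2 / p) * w) ^ (p / (p - 2)) + ε * w
    let wopt : ℝ := (p / 2) * (x ^ 2 + ε) ^ ((p - 2) / 2)
    0 < wopt ∧
    (∀ w : ℝ, 0 < w → (x ^ 2 + ε) ^ (p / 2) ≤ w * x ^ 2 + φ w) ∧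
    wopt * x ^ 2 + φ wopt = (x ^ 2 + ε) ^ (p / 2) ∧
    (∀ w : ℝ, 0 < w → w * x ^ 2 + φ w = (x ^ 2 + ε) ^ (p / 2) → w = wopt) := by
  intro φ wopt
  have hθ₀ : 0 < p / 2 := by linarith
  have hθ₁ : p / 2 < 1 := by linarith
  have hs : 0 < x ^ 2 + ε := by positivity
  have hobj : ∀ w, w * x ^ 2 + φ w =
      w * (x ^ 2 + ε) + (1 - p / 2) * (w / (p / 2)) ^ (p / 2 / (p / 2 - 1)) := by
    intro w
    have hbase : 2 / p * w = w / (p / 2) := by ring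
    have hexp : p / (p - 2) = p / 2 / (p / 2 - 1) := by
      field_simp [(by linarith : p - 2 ≠ 0)]
    simp only [φ, hbase, hexp]
    ring
  have hwopt : wopt = p / 2 * (x ^ 2 + ε) ^ (p / 2 - 1) := by
    simp only [wopt, show (p - 2) / 2 = p / 2 - 1 by ring]
  have hwopt_pos : 0 < wopt := by rw [hwopt]; positivity
  have hmin : ∀ w, 0 < w → ((x ^ 2 + ε) ^ (p / 2) = w * x ^ 2 + φ w ↔ w = wopt) := by
    intro w hw
    rw [hobj, hwopt]
    exact Real.rpow_eq_mul_add_rpow_div_iff hθ₀ hθ₁ hs hw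
  refine ⟨hwopt_pos, fun w hw => ?_, ((hmin wopt hwopt_pos).2 rfl).symm,
    fun w hw heq => (hmin w hw).1 heq.symm⟩
  rw [hobj]
  exact Real.rpow_le_mul_add_rpow_div hθ₀ hθ₁ hs hw
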